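/- Let ℓ ≥ 2 and let P_{ℓ+1} be a weighted homogeneous polynomial of weight ℓ+1 in (a,b,x). Then there exist polynomials ξ(x,y) and β(a,b), weighted homogeneous of weight ℓ, and η(x,y) and α(a,b), weighted homogeneous of weight ℓ+1, such that the polynomial P*_{ℓ+1} := P_{ℓ+1} + η(x, a+bx) − α(a,b) − x·β(a,b) − b·ξ(x, a+bx) is in normal form, i.e. contains no non-normal monomials. Moreover, if ℓ > 4 then the quadruple (η,α,β,ξ) with this property is unique. (Consequently, if the weighted ℓ-jet of a regular hypersurface y = a + bx + Σ_{ν≥3} P_ν is in jet normal form, the mapping X = x+ξ(x,y), Y = y+η(x,y), A = a+α(a,b), B = b+β(a,b) takes its weighted (ℓ+1)-jet into jet normal form without changing the terms of weight ≤ ℓ.) -/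

import Mathlib

/- Weights: a ↦ 2, b ↦ 1, x ↦ 1 (variables of `MvPolynomial (Fin 3) ℝ`, indices 0,1,2);
   for polynomials in (x,y): x ↦ 1, y ↦ 2; for polynomials in (a,b): a ↦ 2, b ↦ 1. -/

open MvPolynomial

/-- weights on the variables (a, b, x) -/
noncomputable def wABX : Fin 3 → ℕ := ![2, 1, 1]
/-- weights on the variables (x, y) -/
noncomputable def wXY : Fin 2 → ℕ := ![1, 2]
/-- weights on the variables (a, b) -/
noncomputable def wAB : Fin 2 → ℕ := ![2, 1]

/-- The Chern–Moser operator: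
`T(η,α,β,ξ)(a,b,x) = η(x, a+bx) − α(a,b) − x·β(a,b) − b·ξ(x, a+bx)`. -/
noncomputable def cmT (η α β ξ : MvPolynomial (Fin 2) ℝ) : MvPolynomial (Fin 3) ℝ :=
  aeval ![(X 2 : MvPolynomial (Fin 3) ℝ), X 0 + X 1 * X 2] η
  - aeval ![(X 0 : MvPolynomial (Fin 3) ℝ), X 1] α
  - X 2 * aeval ![(X 0 : MvPolynomial (Fin 3) ℝ), X 1] β
  - X 1 * aeval ![(X 2 : MvPolynomial (Fin 3) ℝ), X 0 + X 1 * X 2] ξ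

/-- A monomial `a^(d 0) b^(d 1) x^(d 2)` is non-normal if it is of one of the types
`a^i x^j`, `a^i b^j`, `a^i b x^j`, `a^i b^j x`, `a^i b^2 x^2`, `a^i b^2 x^3`,
`a^i b^3 x^2`, `a^i b^3 x^3`. -/
def NonNormal (d : Fin 3 →₀ ℕ) : Prop :=
  d 1 = 0 ∨ d 2 = 0 ∨ d 1 = 1 ∨ d 2 = 1 ∨
    ((d 1 = 2 ∨ d 1 = 3) ∧ (d 2 = 2 ∨ d 2 = 3))

/-!
Record a weighted homogeneous `η(x, y)` of weight `w` by the sequence `η_n` of its coefficients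
of `x^(w-2n) y^n`, and `α(a, b)` by the sequence `α_m` of its coefficients of `a^m b^(w-2m)`
(likewise `ξ`, `β`). Since `(a + bx)^n = ∑ C(n, j) a^(n-j) b^j x^j`, the coefficient of
`a^i b^j x^k` (`2i + j + k = ℓ + 1`) in `η(x, a+bx) - α - xβ - bξ(x, a+bx)` is
`C(i+j, j) η_{i+j} - [k = 1] β_i - [k = 0] α_i - C(i+j-1, j-1) ξ_{i+j-1}`.
Removing the non-normal monomials is therefore an almost triangular linear system: the monomials
with `k = 0` and `k = 1` determine `α` and `β`, those of the form `a^i x^k` and `a^i b x^k` with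
`k ≥ 2` determine `η` and `ξ` up to their top coefficients, and the four exceptional families
`a^i b^{2,3} x^{2,3}` leave a small system for the top coefficients. Its determinant is
`-C(M, 2)` when `ℓ = 2M`, and `C(M,2) C(M-1,2) - (M-1) C(M,3) = M (M-1)^2 (M-2) / 12` when
`ℓ + 1 = 2M`; for `ℓ ≤ 3` some of these equations are absent and the free top coefficients
are set to `0`.
-/
open Finset

theorem MvPolynomial.IsWeightedHomogeneous.aeval {σ τ R M : Type*} [CommSemiring R]
    [AddCommMonoid M] {w : σ → M} {w' : τ → M} {φ : MvPolynomial σ R} {n : M}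
    (hφ : φ.IsWeightedHomogeneous w n) {g : σ → MvPolynomial τ R}
    (hg : ∀ s, (g s).IsWeightedHomogeneous w' (w s)) :
    (aeval g φ).IsWeightedHomogeneous w' n := by
  rw [φ.as_sum, map_sum]
  refine IsWeightedHomogeneous.sum _ _ _ fun d hd => ?_
  rw [aeval_monomial, ← hφ (mem_support_iff.mp hd), Finsupp.weight_apply, algebraMap_eq]
  exact (IsWeightedHomogeneous.prod _ _ _ fun s _ => (hg s).pow (d s)).C_mul _

lemma exists_solution_of_det_ne_zero {a b c d : ℝ} (hdet : a * d - b * c ≠ 0) (e f : ℝ) :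
    ∃ u v, a * u - b * v = e ∧ c * u - d * v = f :=
  ⟨(d * e - b * f) / (a * d - b * c), (c * e - a * f) / (a * d - b * c), by
    constructor <;> rw [mul_div_assoc', mul_div_assoc', div_sub_div_same, div_eq_iff hdet] <;> ring⟩

lemma eq_zero_of_det_ne_zero {a b c d u v : ℝ} (hdet : a * d - b * c ≠ 0)
    (h₁ : a * u - b * v = 0) (h₂ : c * u - d * v = 0) : u = 0 ∧ v = 0 := by
  constructor
  · refine (mul_eq_zero.mp ?_).resolve_left hdet
    linear_combination d * h₁ - b * h₂
  · refine (mul_eq_zero.mp ?_).resolve_left hdet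
    linear_combination c * h₁ - a * h₂

lemma choose_det_ne_zero (m : ℕ) :
    ((m + 3).choose 2 : ℝ) * (m + 2).choose 2 - (m + 2 : ℝ) * (m + 3).choose 3 ≠ 0 := by
  have h3 : ((m + 3).choose 3 : ℝ) * 3 = ((m + 3).choose 2 : ℝ) * (m + 1) := by
    exact_mod_cast Nat.choose_succ_right_eq (m + 3) 2
  have h3' : ((m + 3).choose 3 : ℝ) = (m + 3) * (m + 2) * (m + 1) / 6 := by
    rw [Nat.cast_choose_two] at h3
    push_cast at h3
    linarith
  rw [Nat.cast_choose_two, Nat.cast_choose_two, h3']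
  push_cast
  have : ((m : ℝ) + 3) * (m + 3 - 1) / 2 * ((m + 2) * (m + 2 - 1) / 2) -
      (m + 2) * ((m + 3) * (m + 2) * (m + 1) / 6) = (m + 3) * (m + 2) ^ 2 * (m + 1) / 12 := by ring
  rw [this]
  positivity

-- `mon3 i j k` is the exponent of `a^i b^j x^k`; `mon2 m n` that of `x^m y^n` or `a^m b^n`.
noncomputable def mon3 (i j k : ℕ) : Fin 3 →₀ ℕ :=
  Finsupp.single 0 i + Finsupp.single 1 j + Finsupp.single 2 k

noncomputable def mon2 (m n : ℕ) : Fin 2 →₀ ℕ :=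
  Finsupp.single 0 m + Finsupp.single 1 n

@[simp] lemma mon3_apply_zero (i j k : ℕ) : mon3 i j k 0 = i := by simp [mon3]
@[simp] lemma mon3_apply_one (i j k : ℕ) : mon3 i j k 1 = j := by simp [mon3]
@[simp] lemma mon3_apply_two (i j k : ℕ) : mon3 i j k 2 = k := by simp [mon3]
@[simp] lemma mon2_apply_zero (m n : ℕ) : mon2 m n 0 = m := by simp [mon2]
@[simp] lemma mon2_apply_one (m n : ℕ) : mon2 m n 1 = n := by simp [mon2]

lemma eq_mon3 (d : Fin 3 →₀ ℕ) : d = mon3 (d 0) (d 1) (d 2) := by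
  ext s; fin_cases s <;> simp

lemma eq_mon2 (d : Fin 2 →₀ ℕ) : d = mon2 (d 0) (d 1) := by
  ext s; fin_cases s <;> simp

@[simp] lemma mon3_inj {i j k i' j' k' : ℕ} :
    mon3 i j k = mon3 i' j' k' ↔ i = i' ∧ j = j' ∧ k = k' := by
  simp [Finsupp.ext_iff, Fin.forall_fin_succ]

@[simp] lemma mon2_inj {m n m' n' : ℕ} : mon2 m n = mon2 m' n' ↔ m = m' ∧ n = n' := by
  simp [Finsupp.ext_iff, Fin.forall_fin_two]

@[simp] lemma weight_mon3 (i j k : ℕ) : Finsupp.weight wABX (mon3 i j k) = 2 * i + j + k := by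
  simp [Finsupp.weight_eq_sum, Fin.sum_univ_succ, wABX]; ring

@[simp] lemma weight_mon2_xy (m n : ℕ) : Finsupp.weight wXY (mon2 m n) = m + 2 * n := by
  simp [Finsupp.weight_eq_sum, wXY]; ring

@[simp] lemma weight_mon2_ab (m n : ℕ) : Finsupp.weight wAB (mon2 m n) = 2 * m + n := by
  simp [Finsupp.weight_eq_sum, wAB]; ring

lemma mon3_sub_single_one (i j k : ℕ) : mon3 i j k - Finsupp.single 1 1 = mon3 i (j - 1) k := by
  ext s; fin_cases s <;> simp [mon3]

lemma mon3_sub_single_two (i j k : ℕ) : mon3 i j k - Finsupp.single 2 1 = mon3 i j (k - 1) := by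
  ext s; fin_cases s <;> simp [mon3]

lemma monomial_mon2 {R : Type*} [CommSemiring R] (m n : ℕ) (c : R) :
    monomial (mon2 m n) c = C c * X 0 ^ m * X 1 ^ n := by
  rw [mul_assoc, X_pow_eq_monomial, X_pow_eq_monomial, monomial_mul, C_mul_monomial, mon2]
  simp

lemma monomial_mon3 {R : Type*} [CommSemiring R] (i j k : ℕ) (c : R) :
    monomial (mon3 i j k) c = C c * X 0 ^ i * X 1 ^ j * X 2 ^ k := by
  rw [mul_assoc, mul_assoc, X_pow_eq_monomial, X_pow_eq_monomial, X_pow_eq_monomial,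
    monomial_mul, monomial_mul, C_mul_monomial, mon3]
  simp [add_assoc]

lemma coeff_aeval_ab (q : MvPolynomial (Fin 2) ℝ) (i j k : ℕ) :
    coeff (mon3 i j k) (aeval ![(X 0 : MvPolynomial (Fin 3) ℝ), X 1] q) =
      if k = 0 then q.coeff (mon2 i j) else 0 := by
  induction q using MvPolynomial.induction_on' with
  | add p q hp hq => simp only [map_add, coeff_add, hp, hq]; split_ifs <;> simp
  | monomial u c =>
    obtain ⟨m, n, rfl⟩ : ∃ m n, u = mon2 m n := ⟨_, _, eq_mon2 u⟩
    have hu : aeval ![(X 0 : MvPolynomial (Fin 3) ℝ), X 1] (monomial (mon2 m n) c) =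
        monomial (mon3 m n 0) c := by
      rw [monomial_mon2, monomial_mon3]
      simp
    simp only [hu, coeff_monomial, mon3_inj, mon2_inj]
    split_ifs <;> first | rfl | (exfalso; omega)

lemma coeff_aeval_shear (q : MvPolynomial (Fin 2) ℝ) (i j k : ℕ) :
    coeff (mon3 i j k) (aeval ![(X 2 : MvPolynomial (Fin 3) ℝ), X 0 + X 1 * X 2] q) =
      if j ≤ k then ((i + j).choose j : ℝ) * q.coeff (mon2 (k - j) (i + j)) else 0 := by
  induction q using MvPolynomial.induction_on' with
  | add p q hp hq => simp only [map_add, coeff_add, hp, hq]; split_ifs <;> ring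
  | monomial u c =>
    obtain ⟨m, n, rfl⟩ : ∃ m n, u = mon2 m n := ⟨_, _, eq_mon2 u⟩
    have hexpand : aeval ![(X 2 : MvPolynomial (Fin 3) ℝ), X 0 + X 1 * X 2] (monomial (mon2 m n) c)
        = ∑ t ∈ range (n + 1), monomial (mon3 (n - t) t (m + t)) (c * n.choose t) := by
      rw [monomial_mon2]
      simp only [map_mul, map_pow, aeval_C, aeval_X, algebraMap_eq, Matrix.cons_val_zero,
        Matrix.cons_val_one]
      rw [add_comm, add_pow, mul_sum]
      refine sum_congr rfl fun t _ => ?_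
      rw [monomial_mon3, map_mul, map_natCast]
      ring
    rw [hexpand, coeff_sum, sum_eq_single j]
    · simp only [coeff_monomial, mon3_inj, mon2_inj, true_and]
      by_cases hjn : j ≤ n
      · split_ifs
        · rw [show n = i + j by omega]; ring
        all_goals first | (exfalso; omega) | simp
      · rw [Nat.choose_eq_zero_of_lt (not_le.mp hjn)]
        split_ifs <;> first | (exfalso; omega) | simp
    · intro t _ htj
      simp [coeff_monomial, htj]
    · intro hj
      rw [Nat.choose_eq_zero_of_lt (by simpa using hj)]
      simp

lemma isWeightedHomogeneous_cmT {ℓ : ℕ} {η α β ξ : MvPolynomial (Fin 2) ℝ}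
    (hη : η.IsWeightedHomogeneous wXY (ℓ + 1)) (hα : α.IsWeightedHomogeneous wAB (ℓ + 1))
    (hβ : β.IsWeightedHomogeneous wAB ℓ) (hξ : ξ.IsWeightedHomogeneous wXY ℓ) :
    (cmT η α β ξ).IsWeightedHomogeneous wABX (ℓ + 1) := by
  have hX : ∀ s, (X s : MvPolynomial (Fin 3) ℝ).IsWeightedHomogeneous wABX (wABX s) :=
    isWeightedHomogeneous_X ℝ wABX
  have hshear : ∀ s, (![X 2, X 0 + X 1 * X 2] s : MvPolynomial (Fin 3) ℝ).IsWeightedHomogeneous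
      wABX (wXY s) := by
    simp only [Fin.forall_fin_two]
    exact ⟨hX 2, (hX 0).add ((hX 1).mul (hX 2))⟩
  have hab : ∀ s, (![X 0, X 1] s : MvPolynomial (Fin 3) ℝ).IsWeightedHomogeneous
      wABX (wAB s) := by
    simp only [Fin.forall_fin_two]
    exact ⟨hX 0, hX 1⟩
  have hshift : ∀ s {q : MvPolynomial (Fin 3) ℝ}, wABX s = 1 → q.IsWeightedHomogeneous wABX ℓ →
      (X s * q).IsWeightedHomogeneous wABX (ℓ + 1) := fun s q hs hq => by
    simpa [hs, add_comm] using (hX s).mul hq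
  exact (((hη.aeval hshear).sub (hα.aeval hab)).sub (hshift 2 rfl (hβ.aeval hab))).sub
    (hshift 1 rfl (hξ.aeval hshear))

lemma coeff_X_two_mul (q : MvPolynomial (Fin 3) ℝ) (i j k : ℕ) :
    coeff (mon3 i j k) (X 2 * q) = if k = 0 then 0 else coeff (mon3 i j (k - 1)) q := by
  rw [coeff_X_mul', mon3_sub_single_two]
  simp [ite_not]

lemma coeff_X_one_mul (q : MvPolynomial (Fin 3) ℝ) (i j k : ℕ) :
    coeff (mon3 i j k) (X 1 * q) = if j = 0 then 0 else coeff (mon3 i (j - 1) k) q := by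
  rw [coeff_X_mul', mon3_sub_single_one]
  simp [ite_not]

noncomputable def xyCoeffs (w : ℕ) (q : MvPolynomial (Fin 2) ℝ) (n : ℕ) : ℝ :=
  q.coeff (mon2 (w - 2 * n) n)

noncomputable def abCoeffs (w : ℕ) (q : MvPolynomial (Fin 2) ℝ) (m : ℕ) : ℝ :=
  q.coeff (mon2 m (w - 2 * m))

noncomputable def etaXiCoeff (η ξ : ℕ → ℝ) (i j k : ℕ) : ℝ :=
  (if j ≤ k then ((i + j).choose j : ℝ) * η (i + j) else 0) -
    if 1 ≤ j ∧ j ≤ k + 1 then ((i + j - 1).choose (j - 1) : ℝ) * ξ (i + j - 1) else 0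

noncomputable def cmCoeff (η α β ξ : ℕ → ℝ) (i j k : ℕ) : ℝ :=
  etaXiCoeff η ξ i j k - (if k = 1 then β i else 0) - if k = 0 then α i else 0

lemma coeff_cmT {ℓ i j k : ℕ} (η α β ξ : MvPolynomial (Fin 2) ℝ) (hw : 2 * i + j + k = ℓ + 1) :
    coeff (mon3 i j k) (cmT η α β ξ) = cmCoeff (xyCoeffs (ℓ + 1) η) (abCoeffs (ℓ + 1) α)
      (abCoeffs ℓ β) (xyCoeffs ℓ ξ) i j k := by
  have hη : coeff (mon3 i j k) (aeval ![(X 2 : MvPolynomial (Fin 3) ℝ), X 0 + X 1 * X 2] η) =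
      if j ≤ k then ((i + j).choose j : ℝ) * xyCoeffs (ℓ + 1) η (i + j) else 0 := by
    rw [coeff_aeval_shear]
    split_ifs
    · rw [xyCoeffs, show ℓ + 1 - 2 * (i + j) = k - j by omega]
    · rfl
  have hξ : coeff (mon3 i j k)
      (X 1 * aeval ![(X 2 : MvPolynomial (Fin 3) ℝ), X 0 + X 1 * X 2] ξ) =
      if 1 ≤ j ∧ j ≤ k + 1 then
        ((i + j - 1).choose (j - 1) : ℝ) * xyCoeffs ℓ ξ (i + j - 1) else 0 := by
    rw [coeff_X_one_mul, coeff_aeval_shear]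
    split_ifs <;> first | (exfalso; omega) | rfl | skip
    rw [xyCoeffs, show ℓ - 2 * (i + j - 1) = k - (j - 1) by omega,
      show i + j - 1 = i + (j - 1) by omega]
  have hα : coeff (mon3 i j k) (aeval ![(X 0 : MvPolynomial (Fin 3) ℝ), X 1] α) =
      if k = 0 then abCoeffs (ℓ + 1) α i else 0 := by
    rw [coeff_aeval_ab]
    split_ifs
    · rw [abCoeffs, show ℓ + 1 - 2 * i = j by omega]
    · rfl
  have hβ : coeff (mon3 i j k) (X 2 * aeval ![(X 0 : MvPolynomial (Fin 3) ℝ), X 1] β) =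
      if k = 1 then abCoeffs ℓ β i else 0 := by
    rw [coeff_X_two_mul, coeff_aeval_ab]
    split_ifs <;> first | (exfalso; omega) | rfl | skip
    rw [abCoeffs, show ℓ - 2 * i = j by omega]
  rw [cmT, coeff_sub, coeff_sub, coeff_sub, hη, hξ, hα, hβ, cmCoeff, etaXiCoeff]
  ring

def IsNormalForm (Q : MvPolynomial (Fin 3) ℝ) : Prop :=
  ∀ d ∈ Q.support, ¬ NonNormal d

def Normalizes (ℓ : ℕ) (p : ℕ → ℕ → ℕ → ℝ) (h a b x : ℕ → ℝ) : Prop :=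
  ∀ i j k, 2 * i + j + k = ℓ + 1 → NonNormal (mon3 i j k) → p i j k + cmCoeff h a b x i j k = 0

lemma normalizes_of_isNormalForm {ℓ : ℕ} {P : MvPolynomial (Fin 3) ℝ}
    {η α β ξ : MvPolynomial (Fin 2) ℝ} (hN : IsNormalForm (P + cmT η α β ξ)) :
    Normalizes ℓ (fun i j k => P.coeff (mon3 i j k)) (xyCoeffs (ℓ + 1) η) (abCoeffs (ℓ + 1) α)
      (abCoeffs ℓ β) (xyCoeffs ℓ ξ) := by
  intro i j k hw hnn
  rw [← coeff_cmT η α β ξ hw, ← coeff_add]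
  by_contra hne
  exact hN _ (mem_support_iff.mpr hne) hnn

lemma isNormalForm_of_normalizes {ℓ : ℕ} {P : MvPolynomial (Fin 3) ℝ}
    {η α β ξ : MvPolynomial (Fin 2) ℝ} (hP : P.IsWeightedHomogeneous wABX (ℓ + 1))
    (hη : η.IsWeightedHomogeneous wXY (ℓ + 1)) (hα : α.IsWeightedHomogeneous wAB (ℓ + 1))
    (hβ : β.IsWeightedHomogeneous wAB ℓ) (hξ : ξ.IsWeightedHomogeneous wXY ℓ)
    (hn : Normalizes ℓ (fun i j k => P.coeff (mon3 i j k)) (xyCoeffs (ℓ + 1) η)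
      (abCoeffs (ℓ + 1) α) (abCoeffs ℓ β) (xyCoeffs ℓ ξ)) :
    IsNormalForm (P + cmT η α β ξ) := by
  intro d hd hnn
  obtain ⟨i, j, k, rfl⟩ : ∃ i j k, d = mon3 i j k := ⟨_, _, _, eq_mon3 d⟩
  rw [mem_support_iff] at hd
  have hw : 2 * i + j + k = ℓ + 1 := by
    simpa using hP.add (isWeightedHomogeneous_cmT hη hα hβ hξ) hd
  exact hd (by rw [coeff_add, coeff_cmT η α β ξ hw]; exact hn i j k hw hnn)

noncomputable def xyPoly (w : ℕ) (c : ℕ → ℝ) : MvPolynomial (Fin 2) ℝ :=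
  ∑ n ∈ range (w / 2 + 1), monomial (mon2 (w - 2 * n) n) (c n)

noncomputable def abPoly (w : ℕ) (c : ℕ → ℝ) : MvPolynomial (Fin 2) ℝ :=
  ∑ m ∈ range (w / 2 + 1), monomial (mon2 m (w - 2 * m)) (c m)

lemma isWeightedHomogeneous_xyPoly (w : ℕ) (c : ℕ → ℝ) :
    (xyPoly w c).IsWeightedHomogeneous wXY w :=
  IsWeightedHomogeneous.sum _ _ _ fun n hn =>
    isWeightedHomogeneous_monomial _ _ _ (by simp only [mem_range] at hn; simp; omega)

lemma isWeightedHomogeneous_abPoly (w : ℕ) (c : ℕ → ℝ) :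
    (abPoly w c).IsWeightedHomogeneous wAB w :=
  IsWeightedHomogeneous.sum _ _ _ fun m hm =>
    isWeightedHomogeneous_monomial _ _ _ (by simp only [mem_range] at hm; simp; omega)

lemma xyCoeffs_xyPoly {w n : ℕ} (c : ℕ → ℝ) (hn : 2 * n ≤ w) : xyCoeffs w (xyPoly w c) n = c n := by
  rw [xyCoeffs, xyPoly, coeff_sum, sum_eq_single n]
  · simp
  · intro t _ htn
    simp [coeff_monomial, htn]
  · intro hn'
    simp only [mem_range] at hn'
    omega

lemma abCoeffs_abPoly {w m : ℕ} (c : ℕ → ℝ) (hm : 2 * m ≤ w) : abCoeffs w (abPoly w c) m = c m := by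
  rw [abCoeffs, abPoly, coeff_sum, sum_eq_single m]
  · simp
  · intro t _ htm
    simp [coeff_monomial, htm]
  · intro hm'
    simp only [mem_range] at hm'
    omega

lemma eq_of_xyCoeffs_eq {w : ℕ} {q q' : MvPolynomial (Fin 2) ℝ} (hq : q.IsWeightedHomogeneous wXY w)
    (hq' : q'.IsWeightedHomogeneous wXY w) (h : ∀ n, 2 * n ≤ w → xyCoeffs w q n = xyCoeffs w q' n) :
    q = q' := by
  ext d
  obtain ⟨m, n, rfl⟩ : ∃ m n, d = mon2 m n := ⟨_, _, eq_mon2 d⟩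
  by_cases hw : m + 2 * n = w
  · simpa [xyCoeffs, show w - 2 * n = m by omega] using h n (by omega)
  · rw [hq.coeff_eq_zero _ (by simpa using hw), hq'.coeff_eq_zero _ (by simpa using hw)]

lemma eq_of_abCoeffs_eq {w : ℕ} {q q' : MvPolynomial (Fin 2) ℝ} (hq : q.IsWeightedHomogeneous wAB w)
    (hq' : q'.IsWeightedHomogeneous wAB w) (h : ∀ m, 2 * m ≤ w → abCoeffs w q m = abCoeffs w q' m) :
    q = q' := by
  ext d
  obtain ⟨m, n, rfl⟩ : ∃ m n, d = mon2 m n := ⟨_, _, eq_mon2 d⟩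
  by_cases hw : 2 * m + n = w
  · simpa [abCoeffs, show w - 2 * m = n by omega] using h m (by omega)
  · rw [hq.coeff_eq_zero _ (by simpa using hw), hq'.coeff_eq_zero _ (by simpa using hw)]

section Sequences

variable {ℓ : ℕ} {p : ℕ → ℕ → ℕ → ℝ} {η α β ξ η' α' β' ξ' : ℕ → ℝ}

lemma etaXiCoeff_zero_mid (η ξ : ℕ → ℝ) (i k : ℕ) : etaXiCoeff η ξ i 0 k = η i := by
  simp [etaXiCoeff]

lemma etaXiCoeff_of_le {j k : ℕ} (i : ℕ) (hj : 1 ≤ j) (hjk : j ≤ k) :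
    etaXiCoeff η ξ i j k =
      ((i + j).choose j : ℝ) * η (i + j) - ((i + j - 1).choose (j - 1) : ℝ) * ξ (i + j - 1) := by
  simp [etaXiCoeff, hj, hjk, hjk.trans k.le_succ]

lemma etaXiCoeff_one_mid {k : ℕ} (i : ℕ) (hk : 1 ≤ k) :
    etaXiCoeff η ξ i 1 k = (i + 1) * η (i + 1) - ξ i := by
  simp [etaXiCoeff_of_le i le_rfl hk]

lemma etaXiCoeff_succ_self (i k : ℕ) :
    etaXiCoeff η ξ i (k + 1) k = -(((i + k).choose k : ℝ) * ξ (i + k)) := by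
  simp [etaXiCoeff, ← add_assoc]

lemma etaXiCoeff_eq_zero {i j k : ℕ} (hη : ∀ n, 2 * n ≤ ℓ + 1 → η n = 0)
    (hξ : ∀ n, 2 * n ≤ ℓ → ξ n = 0) (hw : 2 * i + j + k = ℓ + 1) : etaXiCoeff η ξ i j k = 0 := by
  unfold etaXiCoeff
  split_ifs <;> simp (disch := omega) [hη, hξ]

lemma cmCoeff_of_two_le {k : ℕ} (i j : ℕ) (hk : 2 ≤ k) :
    cmCoeff η α β ξ i j k = etaXiCoeff η ξ i j k := by
  simp [cmCoeff, show k ≠ 1 by omega, show k ≠ 0 by omega]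

lemma cmCoeff_zero_right (i j : ℕ) : cmCoeff η α β ξ i j 0 = etaXiCoeff η ξ i j 0 - α i := by
  simp [cmCoeff]

lemma cmCoeff_one_right (i j : ℕ) : cmCoeff η α β ξ i j 1 = etaXiCoeff η ξ i j 1 - β i := by
  simp [cmCoeff]

lemma cmCoeff_sub (i j k : ℕ) : cmCoeff (η - η') (α - α') (β - β') (ξ - ξ') i j k =
    cmCoeff η α β ξ i j k - cmCoeff η' α' β' ξ' i j k := by
  simp only [cmCoeff, etaXiCoeff, Pi.sub_apply]
  split_ifs <;> ring

lemma Normalizes.sub (hN : Normalizes ℓ p η α β ξ) (hN' : Normalizes ℓ p η' α' β' ξ') :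
    Normalizes ℓ 0 (η - η') (α - α') (β - β') (ξ - ξ') := fun i j k hw hnn => by
  simp only [cmCoeff_sub, Pi.zero_apply]
  linarith [hN i j k hw hnn, hN' i j k hw hnn]

lemma Normalizes.congr (hN : Normalizes ℓ p η α β ξ) (hη : ∀ n, 2 * n ≤ ℓ + 1 → η' n = η n)
    (hα : ∀ n, 2 * n ≤ ℓ + 1 → α' n = α n) (hβ : ∀ n, 2 * n ≤ ℓ → β' n = β n)
    (hξ : ∀ n, 2 * n ≤ ℓ → ξ' n = ξ n) : Normalizes ℓ p η' α' β' ξ' := fun i j k hw hnn => by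
  rw [← hN i j k hw hnn]
  unfold cmCoeff etaXiCoeff
  split_ifs <;> simp (disch := omega) only [hη, hα, hβ, hξ]

lemma Normalizes.eta_eq (hN : Normalizes ℓ p η α β ξ) {n : ℕ} (hn : 2 * n + 2 ≤ ℓ + 1) :
    η n = -p n 0 (ℓ + 1 - 2 * n) := by
  have := hN n 0 (ℓ + 1 - 2 * n) (by omega) (by simp [NonNormal])
  rw [cmCoeff_of_two_le _ _ (by omega), etaXiCoeff_zero_mid] at this
  linarith

lemma Normalizes.xi_eq (hN : Normalizes ℓ p η α β ξ) {n : ℕ} (hn : 2 * n + 2 ≤ ℓ) :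
    ξ n = (n + 1) * η (n + 1) + p n 1 (ℓ - 2 * n) := by
  have := hN n 1 (ℓ - 2 * n) (by omega) (by simp [NonNormal])
  rw [cmCoeff_of_two_le _ _ (by omega), etaXiCoeff_one_mid _ (by omega)] at this
  linarith

lemma Normalizes.alpha_eq (hN : Normalizes ℓ p η α β ξ) {n : ℕ} (hn : 2 * n ≤ ℓ + 1) :
    α n = p n (ℓ + 1 - 2 * n) 0 + etaXiCoeff η ξ n (ℓ + 1 - 2 * n) 0 := by
  have := hN n (ℓ + 1 - 2 * n) 0 (by omega) (by simp [NonNormal])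
  rw [cmCoeff_zero_right] at this
  linarith

lemma Normalizes.beta_eq (hN : Normalizes ℓ p η α β ξ) {n : ℕ} (hn : 2 * n ≤ ℓ) :
    β n = p n (ℓ - 2 * n) 1 + etaXiCoeff η ξ n (ℓ - 2 * n) 1 := by
  have := hN n (ℓ - 2 * n) 1 (by omega) (by simp [NonNormal])
  rw [cmCoeff_one_right] at this
  linarith

def CornerEqs (ℓ : ℕ) (p : ℕ → ℕ → ℕ → ℝ) (η ξ : ℕ → ℝ) : Prop :=
  ∀ i j k, 2 * i + j + k = ℓ + 1 → (j = 2 ∨ j = 3) → (k = 2 ∨ k = 3) →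
    p i j k + etaXiCoeff η ξ i j k = 0

lemma normalizes_of_cornerEqs (hη : ∀ n, 2 * n + 2 ≤ ℓ + 1 → η n = -p n 0 (ℓ + 1 - 2 * n))
    (hξ : ∀ n, 2 * n + 2 ≤ ℓ → ξ n = (n + 1) * η (n + 1) + p n 1 (ℓ - 2 * n))
    (hc : CornerEqs ℓ p η ξ) :
    Normalizes ℓ p η (fun n => p n (ℓ + 1 - 2 * n) 0 + etaXiCoeff η ξ n (ℓ + 1 - 2 * n) 0)
      (fun n => p n (ℓ - 2 * n) 1 + etaXiCoeff η ξ n (ℓ - 2 * n) 1) ξ := by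
  intro i j k hw hnn
  obtain rfl | rfl | hk := (by omega : k = 0 ∨ k = 1 ∨ 2 ≤ k)
  · rw [cmCoeff_zero_right, show ℓ + 1 - 2 * i = j by omega]
    ring
  · rw [cmCoeff_one_right, show ℓ - 2 * i = j by omega]
    ring
  rw [cmCoeff_of_two_le _ _ hk]
  simp only [NonNormal, mon3_apply_one, mon3_apply_two] at hnn
  rcases hnn with rfl | hk0 | rfl | hk1 | ⟨hj, hk'⟩
  · rw [etaXiCoeff_zero_mid, hη i (by omega), show ℓ + 1 - 2 * i = k by omega]
    ring
  · omega
  · rw [etaXiCoeff_one_mid _ (by omega), hξ i (by omega), show ℓ - 2 * i = k by omega]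
    ring
  · omega
  · exact hc i j k hw hj hk'

-- The coefficients forced by the monomials `a^i x^k` and `a^i b x^k` with `k ≥ 2`; the top
-- coefficients `H` of `η` and `Ξ` of `ξ` are left as parameters.
noncomputable def normalEta (ℓ : ℕ) (p : ℕ → ℕ → ℕ → ℝ) (H : ℝ) (n : ℕ) : ℝ :=
  if 2 * n + 2 ≤ ℓ + 1 then -p n 0 (ℓ + 1 - 2 * n) else H

noncomputable def normalXi (ℓ : ℕ) (p : ℕ → ℕ → ℕ → ℝ) (H Ξ : ℝ) (n : ℕ) : ℝ :=
  if 2 * n + 2 ≤ ℓ then (n + 1) * normalEta ℓ p H (n + 1) + p n 1 (ℓ - 2 * n) else Ξ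

lemma cornerEqs_two (p : ℕ → ℕ → ℕ → ℝ) (η ξ : ℕ → ℝ) : CornerEqs 2 p η ξ := by
  intro i j k hw hj hk
  omega

lemma cornerEqs_three (p : ℕ → ℕ → ℕ → ℝ) :
    CornerEqs 3 p (normalEta 3 p 0) (normalXi 3 p 0 (p 0 2 2)) := by
  intro i j k hw hj hk
  obtain ⟨rfl, rfl, rfl⟩ : i = 0 ∧ j = 2 ∧ k = 2 := by omega
  rw [etaXiCoeff_of_le 0 (by norm_num) le_rfl]
  simp [normalEta, normalXi]

lemma exists_cornerEqs_two_mul_add_four (m : ℕ) (p : ℕ → ℕ → ℕ → ℝ) :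
    ∃ H Ξ, CornerEqs (2 * m + 4) p (normalEta (2 * m + 4) p H) (normalXi (2 * m + 4) p H Ξ) := by
  set c : ℝ := ↑((m + 2).choose 2) with hc_def
  have hc : c ≠ 0 := Nat.cast_ne_zero.mpr (Nat.choose_pos (by omega)).ne'
  have hc2 : ((m : ℝ) + 2) * (m + 1) = 2 * c := by
    rw [hc_def, Nat.cast_choose_two]; push_cast; ring
  obtain ⟨H, hH⟩ : ∃ H, c * H = p m 2 3 - (m + 1) * p (m + 1) 1 2 := ⟨_, mul_div_cancel₀ _ hc⟩
  obtain ⟨Ξ, hΞ⟩ : ∃ Ξ, c * Ξ = p m 3 2 := ⟨_, mul_div_cancel₀ _ hc⟩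
  refine ⟨H, Ξ, fun i j k hw hj hk => ?_⟩
  obtain ⟨rfl, rfl, rfl⟩ | ⟨rfl, rfl, rfl⟩ : m = i ∧ j = 2 ∧ k = 3 ∨ m = i ∧ j = 3 ∧ k = 2 := by
    omega
  · rw [etaXiCoeff_of_le m (by norm_num) (by norm_num)]
    simp (disch := omega) only [normalEta, normalXi, if_pos, if_neg]
    simp only [show m + 2 - 1 = m + 1 by omega, show 2 * m + 4 - 2 * (m + 1) = 2 by omega,
      show 2 - 1 = 1 from rfl, Nat.choose_one_right]
    push_cast
    linear_combination -hH - H * hc2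
  · rw [etaXiCoeff_succ_self]
    simp (disch := omega) only [normalXi, if_neg]
    linear_combination -hΞ

lemma exists_cornerEqs_two_mul_add_five (m : ℕ) (p : ℕ → ℕ → ℕ → ℝ) :
    ∃ H Ξ, CornerEqs (2 * m + 5) p (normalEta (2 * m + 5) p H) (normalXi (2 * m + 5) p H Ξ) := by
  obtain ⟨H, Ξ, h₂₂, h₃₃⟩ := exists_solution_of_det_ne_zero (choose_det_ne_zero m)
    (-p (m + 1) 2 2) (-p m 3 3)
  refine ⟨H, Ξ, fun i j k hw hj hk => ?_⟩
  obtain ⟨rfl, rfl, rfl⟩ | ⟨rfl, rfl, rfl⟩ :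
      m + 1 = i ∧ j = 2 ∧ k = 2 ∨ m = i ∧ j = 3 ∧ k = 3 := by
    omega
  · rw [etaXiCoeff_of_le _ (by norm_num) le_rfl]
    simp (disch := omega) only [normalEta, normalXi, if_neg]
    simp only [show m + 1 + 2 = m + 3 from rfl, show m + 1 + 2 - 1 = m + 2 from rfl,
      show 2 - 1 = 1 from rfl, Nat.choose_one_right]
    push_cast
    linear_combination h₂₂
  · rw [etaXiCoeff_of_le _ (by norm_num) le_rfl]
    simp (disch := omega) only [normalEta, normalXi, if_neg]
    simp only [show m + 3 - 1 = m + 2 from rfl, show 3 - 1 = 2 from rfl]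
    linear_combination h₃₃

lemma exists_cornerEqs (hℓ : 2 ≤ ℓ) (p : ℕ → ℕ → ℕ → ℝ) :
    ∃ H Ξ, CornerEqs ℓ p (normalEta ℓ p H) (normalXi ℓ p H Ξ) := by
  obtain rfl | rfl | hℓ4 := (by omega : ℓ = 2 ∨ ℓ = 3 ∨ 4 ≤ ℓ)
  · exact ⟨0, 0, cornerEqs_two p _ _⟩
  · exact ⟨0, p 0 2 2, cornerEqs_three p⟩
  obtain ⟨m, rfl | rfl⟩ : ∃ m, ℓ = 2 * m + 4 ∨ ℓ = 2 * m + 5 := ⟨(ℓ - 4) / 2, by omega⟩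
  exacts [exists_cornerEqs_two_mul_add_four m p, exists_cornerEqs_two_mul_add_five m p]

lemma exists_normalizes (hℓ : 2 ≤ ℓ) (p : ℕ → ℕ → ℕ → ℝ) :
    ∃ η α β ξ, Normalizes ℓ p η α β ξ := by
  obtain ⟨H, Ξ, hc⟩ := exists_cornerEqs hℓ p
  exact ⟨_, _, _, _, normalizes_of_cornerEqs (fun n hn => if_pos hn) (fun n hn => if_pos hn) hc⟩

lemma Normalizes.eta_xi_eq_zero_two_mul_add_four {m : ℕ}
    (hN : Normalizes (2 * m + 4) 0 η α β ξ) :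
    (∀ n, 2 * n ≤ 2 * m + 5 → η n = 0) ∧ ∀ n, 2 * n ≤ 2 * m + 4 → ξ n = 0 := by
  have hη_low : ∀ n ≤ m + 1, η n = 0 := fun n hn => by simpa using hN.eta_eq (n := n) (by omega)
  have hξ_low : ∀ n ≤ m + 1, ξ n = (n + 1) * η (n + 1) := fun n hn => by
    simpa using hN.xi_eq (n := n) (by omega)
  have h₂₃ := hN m 2 3 (by omega) (by simp [NonNormal])
  have h₃₂ := hN m 3 2 (by omega) (by simp [NonNormal])
  rw [cmCoeff_of_two_le _ _ (by norm_num), etaXiCoeff_of_le m (by norm_num) (by norm_num)] at h₂₃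
  rw [cmCoeff_of_two_le _ _ le_rfl, etaXiCoeff_succ_self] at h₃₂
  simp only [Pi.zero_apply, zero_add, show m + 2 - 1 = m + 1 by omega, show 2 - 1 = 1 from rfl,
    Nat.choose_one_right, hξ_low (m + 1) le_rfl] at h₂₃ h₃₂
  have hc : ((m + 2).choose 2 : ℝ) ≠ 0 := Nat.cast_ne_zero.mpr (Nat.choose_pos (by omega)).ne'
  have hc2 : ((m : ℝ) + 2) * (m + 1) = 2 * (m + 2).choose 2 := by
    rw [Nat.cast_choose_two]; push_cast; ring
  have hη_top : η (m + 2) = 0 := by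
    refine (mul_eq_zero.mp ?_).resolve_left hc
    push_cast at h₂₃
    linear_combination -h₂₃ - η (m + 2) * hc2
  have hη : ∀ n ≤ m + 2, η n = 0 := fun n hn => by
    rcases (by omega : n ≤ m + 1 ∨ n = m + 2) with hn | rfl
    exacts [hη_low n hn, hη_top]
  refine ⟨fun n hn => hη n (by omega), fun n hn => ?_⟩
  rcases (by omega : n ≤ m + 1 ∨ n = m + 2) with hn | rfl
  · rw [hξ_low n hn, hη (n + 1) (by omega), mul_zero]
  · exact (mul_eq_zero.mp (neg_eq_zero.mp h₃₂)).resolve_left hc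

lemma Normalizes.eta_xi_eq_zero_two_mul_add_five {m : ℕ}
    (hN : Normalizes (2 * m + 5) 0 η α β ξ) :
    (∀ n, 2 * n ≤ 2 * m + 6 → η n = 0) ∧ ∀ n, 2 * n ≤ 2 * m + 5 → ξ n = 0 := by
  have hη_low : ∀ n ≤ m + 2, η n = 0 := fun n hn => by simpa using hN.eta_eq (n := n) (by omega)
  have hξ_low : ∀ n ≤ m + 1, ξ n = (n + 1) * η (n + 1) := fun n hn => by
    simpa using hN.xi_eq (n := n) (by omega)
  have h₂₂ := hN (m + 1) 2 2 (by omega) (by simp [NonNormal])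
  have h₃₃ := hN m 3 3 (by omega) (by simp [NonNormal])
  rw [cmCoeff_of_two_le _ _ le_rfl, etaXiCoeff_of_le _ (by norm_num) le_rfl] at h₂₂
  rw [cmCoeff_of_two_le _ _ (by norm_num), etaXiCoeff_of_le _ (by norm_num) le_rfl] at h₃₃
  simp only [Pi.zero_apply, zero_add, show m + 1 + 2 = m + 3 from rfl,
    show m + 1 + 2 - 1 = m + 2 from rfl, show 2 - 1 = 1 from rfl,
    show 3 - 1 = 2 from rfl, Nat.choose_one_right] at h₂₂ h₃₃
  push_cast at h₂₂
  obtain ⟨hη_top, hξ_top⟩ := eq_zero_of_det_ne_zero (choose_det_ne_zero m) h₂₂ h₃₃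
  have hη : ∀ n ≤ m + 3, η n = 0 := fun n hn => by
    rcases (by omega : n ≤ m + 2 ∨ n = m + 3) with hn | rfl
    exacts [hη_low n hn, hη_top]
  refine ⟨fun n hn => hη n (by omega), fun n hn => ?_⟩
  rcases (by omega : n ≤ m + 1 ∨ n = m + 2) with hn | rfl
  · rw [hξ_low n hn, hη (n + 1) (by omega), mul_zero]
  · exact hξ_top

lemma Normalizes.eq_zero (hℓ : 4 ≤ ℓ) (hN : Normalizes ℓ 0 η α β ξ) :
    (∀ n, 2 * n ≤ ℓ + 1 → η n = 0) ∧ (∀ n, 2 * n ≤ ℓ + 1 → α n = 0) ∧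
      (∀ n, 2 * n ≤ ℓ → β n = 0) ∧ ∀ n, 2 * n ≤ ℓ → ξ n = 0 := by
  obtain ⟨hη, hξ⟩ : (∀ n, 2 * n ≤ ℓ + 1 → η n = 0) ∧ ∀ n, 2 * n ≤ ℓ → ξ n = 0 := by
    obtain ⟨m, rfl | rfl⟩ : ∃ m, ℓ = 2 * m + 4 ∨ ℓ = 2 * m + 5 := ⟨(ℓ - 4) / 2, by omega⟩
    exacts [hN.eta_xi_eq_zero_two_mul_add_four, hN.eta_xi_eq_zero_two_mul_add_five]
  refine ⟨hη, fun n hn => ?_, fun n hn => ?_, hξ⟩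
  · rw [hN.alpha_eq hn, etaXiCoeff_eq_zero hη hξ (by omega)]
    simp
  · rw [hN.beta_eq hn, etaXiCoeff_eq_zero hη hξ (by omega)]
    simp

end Sequences

lemma exists_isNormalForm {ℓ : ℕ} (hℓ : 2 ≤ ℓ) {P : MvPolynomial (Fin 3) ℝ}
    (hP : P.IsWeightedHomogeneous wABX (ℓ + 1)) :
    ∃ η α β ξ : MvPolynomial (Fin 2) ℝ,
      η.IsWeightedHomogeneous wXY (ℓ + 1) ∧ α.IsWeightedHomogeneous wAB (ℓ + 1) ∧
      β.IsWeightedHomogeneous wAB ℓ ∧ ξ.IsWeightedHomogeneous wXY ℓ ∧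
      IsNormalForm (P + cmT η α β ξ) := by
  obtain ⟨η, α, β, ξ, hN⟩ := exists_normalizes hℓ fun i j k => P.coeff (mon3 i j k)
  have hη := isWeightedHomogeneous_xyPoly (ℓ + 1) η
  have hα := isWeightedHomogeneous_abPoly (ℓ + 1) α
  have hβ := isWeightedHomogeneous_abPoly ℓ β
  have hξ := isWeightedHomogeneous_xyPoly ℓ ξ
  refine ⟨_, _, _, _, hη, hα, hβ, hξ, isNormalForm_of_normalizes hP hη hα hβ hξ ?_⟩
  exact hN.congr (fun n => xyCoeffs_xyPoly η) (fun n => abCoeffs_abPoly α)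
    (fun n => abCoeffs_abPoly β) (fun n => xyCoeffs_xyPoly ξ)

lemma eq_of_isNormalForm {ℓ : ℕ} (hℓ : 4 ≤ ℓ) {P : MvPolynomial (Fin 3) ℝ}
    {η α β ξ η' α' β' ξ' : MvPolynomial (Fin 2) ℝ}
    (hη : η.IsWeightedHomogeneous wXY (ℓ + 1)) (hα : α.IsWeightedHomogeneous wAB (ℓ + 1))
    (hβ : β.IsWeightedHomogeneous wAB ℓ) (hξ : ξ.IsWeightedHomogeneous wXY ℓ)
    (hη' : η'.IsWeightedHomogeneous wXY (ℓ + 1)) (hα' : α'.IsWeightedHomogeneous wAB (ℓ + 1))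
    (hβ' : β'.IsWeightedHomogeneous wAB ℓ) (hξ' : ξ'.IsWeightedHomogeneous wXY ℓ)
    (hN : IsNormalForm (P + cmT η α β ξ)) (hN' : IsNormalForm (P + cmT η' α' β' ξ')) :
    η = η' ∧ α = α' ∧ β = β' ∧ ξ = ξ' := by
  obtain ⟨h₁, h₂, h₃, h₄⟩ :=
    ((normalizes_of_isNormalForm (ℓ := ℓ) hN).sub (normalizes_of_isNormalForm hN')).eq_zero hℓ
  exact ⟨eq_of_xyCoeffs_eq hη hη' fun n hn => sub_eq_zero.mp (h₁ n hn),
    eq_of_abCoeffs_eq hα hα' fun n hn => sub_eq_zero.mp (h₂ n hn),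
    eq_of_abCoeffs_eq hβ hβ' fun n hn => sub_eq_zero.mp (h₃ n hn),
    eq_of_xyCoeffs_eq hξ hξ' fun n hn => sub_eq_zero.mp (h₄ n hn)⟩

/-- Let `ℓ ≥ 2` and let `P` be weighted homogeneous of weight `ℓ+1` in `(a,b,x)`.
Then there are `ξ(x,y)`, `β(a,b)` weighted homogeneous of weight `ℓ` and
`η(x,y)`, `α(a,b)` weighted homogeneous of weight `ℓ+1` such that
`P* = P + η(x,a+bx) − α(a,b) − x·β(a,b) − b·ξ(x,a+bx)` contains no non-normal
monomial; if `ℓ > 4` the quadruple `(η, α, β, ξ)` is unique. -/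
theorem stmt3 (ℓ : ℕ) (hℓ : 2 ≤ ℓ) (P : MvPolynomial (Fin 3) ℝ)
    (hP : P.IsWeightedHomogeneous wABX (ℓ + 1)) :
    (∃ η α β ξ : MvPolynomial (Fin 2) ℝ,
      η.IsWeightedHomogeneous wXY (ℓ + 1) ∧ α.IsWeightedHomogeneous wAB (ℓ + 1) ∧
      β.IsWeightedHomogeneous wAB ℓ ∧ ξ.IsWeightedHomogeneous wXY ℓ ∧
      ∀ d ∈ (P + cmT η α β ξ).support, ¬ NonNormal d) ∧
    (4 < ℓ →
      ∀ η α β ξ η' α' β' ξ' : MvPolynomial (Fin 2) ℝ,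
        η.IsWeightedHomogeneous wXY (ℓ + 1) → α.IsWeightedHomogeneous wAB (ℓ + 1) →
        β.IsWeightedHomogeneous wAB ℓ → ξ.IsWeightedHomogeneous wXY ℓ →
        (∀ d ∈ (P + cmT η α β ξ).support, ¬ NonNormal d) →
        η'.IsWeightedHomogeneous wXY (ℓ + 1) → α'.IsWeightedHomogeneous wAB (ℓ + 1) →
        β'.IsWeightedHomogeneous wAB ℓ → ξ'.IsWeightedHomogeneous wXY ℓ →
        (∀ d ∈ (P + cmT η' α' β' ξ').support, ¬ NonNormal d) →
        η = η' ∧ α = α' ∧ β = β' ∧ ξ = ξ') :=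
  ⟨exists_isNormalForm hℓ hP, fun hℓ4 _ _ _ _ _ _ _ _ hη hα hβ hξ hN hη' hα' hβ' hξ' hN' =>
    eq_of_isNormalForm hℓ4.le hη hα hβ hξ hη' hα' hβ' hξ' hN hN'⟩
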